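/- Suppose Y = T(h*)U for some h* ∈ R_{≥0}^{q+1}, where U satisfies: for all i there exists j with U_{0j} > 0 and (T(h*)U)_{ij} > 0. Then h* is the unique minimizer of h ↦ I(Y||T(h)U) over R_{≥0}^{q+1}, and I(Y||T(h*)U) = 0. Moreover the equation T(h)U = T(h*)U has the unique solution h = h*. -/

import Mathlib

open scoped BigOperators

/-- Csiszár I-divergence between nonnegative matrices, valued in `[0,∞]` (as `EReal`),
with conventions `0·log 0 = 0`, `0/0 = 0` and `p/0 = ∞` for `p > 0`. -/
noncomputable def IdivM {n m : ℕ} (Y Z : Fin n → Fin m → ℝ) : EReal :=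
  ∑ i, ∑ j, if Z i j = 0 ∧ 0 < Y i j then (⊤ : EReal)
    else ((Y i j * Real.log (Y i j / Z i j) - Y i j + Z i j : ℝ) : EReal)

/-- The columnwise convolution `(T(h)U)_{ij} = ∑_{k=0}^{min(i,q)} h_k U_{i-k,j}`. -/
def convM (q N m : ℕ) (h : Fin (q + 1) → ℝ) (U : Fin (N + 1) → Fin m → ℝ) :
    Fin (N + 1) → Fin m → ℝ :=
  fun i j => ∑ k : Fin (q + 1),
    if (k : ℕ) ≤ (i : ℕ) then
      h k * U ⟨(i : ℕ) - (k : ℕ), Nat.lt_of_le_of_lt (Nat.sub_le _ _) i.isLt⟩ j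
    else 0

/-!
Each entry `y log (y/z) - y + z` of the I-divergence equals `z · klFun (y/z)`, hence is
nonnegative and vanishes only for `y = z`; so `I(Y‖Z) ≥ 0` with equality iff `Y = Z`, and
`h*` attains the value `0`. A minimizer `h` therefore satisfies `T(h)U = T(h*)U`, and the
convolution is injective in `h`: since `U_{0j} > 0`, row `n` of `T(h - h*)U` recovers the
coefficient `(h - h*)_n` once the lower coefficients are known to vanish.
-/

open Real InformationTheory

noncomputable def idivEntry (y z : ℝ) : EReal :=
  if z = 0 ∧ 0 < y then ⊤ else ((y * log (y / z) - y + z : ℝ) : EReal)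

lemma IdivM_eq_sum_idivEntry {n m : ℕ} (Y Z : Fin n → Fin m → ℝ) :
    IdivM Y Z = ∑ i, ∑ j, idivEntry (Y i j) (Z i j) := rfl

lemma mul_log_div_sub_add_eq_mul_klFun (y : ℝ) {z : ℝ} (hz : z ≠ 0) :
    y * log (y / z) - y + z = z * klFun (y / z) := by
  rw [klFun_apply]
  field_simp
  ring

lemma idivEntry_self (y : ℝ) : idivEntry y y = 0 := by
  rcases eq_or_ne y 0 with rfl | hy
  · simp [idivEntry]
  · simp [idivEntry, hy]

lemma idivEntry_nonneg {y z : ℝ} (hy : 0 ≤ y) (hz : 0 ≤ z) : 0 ≤ idivEntry y z := by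
  unfold idivEntry
  split_ifs with hinf
  · exact le_top
  rcases hz.eq_or_lt with rfl | hz
  · obtain rfl : y = 0 := by simp only [true_and, not_lt] at hinf; exact le_antisymm hinf hy
    simp
  · rw [mul_log_div_sub_add_eq_mul_klFun y hz.ne']
    exact_mod_cast mul_nonneg hz.le (klFun_nonneg (div_nonneg hy hz.le))

lemma idivEntry_eq_zero_iff {y z : ℝ} (hy : 0 ≤ y) (hz : 0 ≤ z) :
    idivEntry y z = 0 ↔ y = z := by
  unfold idivEntry
  split_ifs with hinf
  · simp only [EReal.top_ne_zero, false_iff]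
    exact fun hyz => hinf.2.ne' (hyz.trans hinf.1)
  rw [EReal.coe_eq_zero]
  rcases hz.eq_or_lt with rfl | hz
  · obtain rfl : y = 0 := by simp only [true_and, not_lt] at hinf; exact le_antisymm hinf hy
    simp
  · rw [mul_log_div_sub_add_eq_mul_klFun y hz.ne', mul_eq_zero,
      klFun_eq_zero_iff (div_nonneg hy hz.le), div_eq_one_iff_eq hz.ne']
    simp [hz.ne']

section IDivergence

variable {n m : ℕ} {Y Z : Fin n → Fin m → ℝ}

lemma IdivM_self (Z : Fin n → Fin m → ℝ) : IdivM Z Z = 0 := by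
  simp [IdivM_eq_sum_idivEntry, idivEntry_self]

lemma IdivM_nonneg (hY : ∀ i j, 0 ≤ Y i j) (hZ : ∀ i j, 0 ≤ Z i j) : 0 ≤ IdivM Y Z :=
  Finset.sum_nonneg fun i _ => Finset.sum_nonneg fun j _ => idivEntry_nonneg (hY i j) (hZ i j)

lemma IdivM_eq_zero_iff (hY : ∀ i j, 0 ≤ Y i j) (hZ : ∀ i j, 0 ≤ Z i j) :
    IdivM Y Z = 0 ↔ Y = Z := by
  have hrow (i : Fin n) : 0 ≤ fun j => idivEntry (Y i j) (Z i j) :=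
    fun j => idivEntry_nonneg (hY i j) (hZ i j)
  rw [IdivM_eq_sum_idivEntry, Fintype.sum_eq_zero_iff_of_nonneg
    fun i => Finset.sum_nonneg fun j _ => hrow i j]
  simp only [funext_iff, Pi.zero_apply, Fintype.sum_eq_zero_iff_of_nonneg (hrow _),
    idivEntry_eq_zero_iff (hY _ _) (hZ _ _)]

end IDivergence

section Convolution

variable {q N m : ℕ} {U : Fin (N + 1) → Fin m → ℝ}

lemma convM_nonneg {h : Fin (q + 1) → ℝ} (hh : ∀ k, 0 ≤ h k) (hU : ∀ i j, 0 ≤ U i j) :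
    ∀ i j, 0 ≤ convM q N m h U i j := fun i j =>
  Finset.sum_nonneg fun k _ => by
    split_ifs
    · exact mul_nonneg (hh k) (hU _ j)
    · exact le_rfl

lemma convM_sub (h g : Fin (q + 1) → ℝ) :
    convM q N m (h - g) U = convM q N m h U - convM q N m g U := by
  funext i j
  simp only [convM, Pi.sub_apply, ← Finset.sum_sub_distrib]
  refine Finset.sum_congr rfl fun k _ => ?_
  split_ifs <;> ring

lemma convM_apply_of_forall_lt_eq_zero {d : Fin (q + 1) → ℝ} (k : Fin (q + 1))
    (hk : (k : ℕ) < N + 1) (hd : ∀ l < k, d l = 0) (j : Fin m) :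
    convM q N m d U ⟨k, hk⟩ j = d k * U 0 j := by
  unfold convM
  rw [Finset.sum_eq_single k]
  · simp only [le_refl, if_true, Nat.sub_self, Fin.mk_zero]
  · intro l _ hlk
    split_ifs with hl
    · rw [hd l (lt_of_le_of_ne (Fin.le_iff_val_le_val.2 hl) hlk), zero_mul]
    · rfl
  · exact fun hk => absurd (Finset.mem_univ k) hk

lemma eq_zero_of_convM_eq_zero (hqN : q ≤ N) {j : Fin m} (hj : U 0 j ≠ 0)
    {d : Fin (q + 1) → ℝ} (hd : convM q N m d U = 0) : d = 0 := by
  funext k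
  induction k using WellFoundedLT.induction with
  | _ k ih =>
    have hk : (k : ℕ) < N + 1 := by omega
    have hrow := congrFun (congrFun hd ⟨k, hk⟩) j
    rw [convM_apply_of_forall_lt_eq_zero k hk ih] at hrow
    exact (mul_eq_zero.1 hrow).resolve_right hj

lemma convM_left_injective (hqN : q ≤ N) {j : Fin m} (hj : U 0 j ≠ 0) :
    Function.Injective fun h => convM q N m h U := fun h g hhg =>
  sub_eq_zero.1 <| eq_zero_of_convM_eq_zero hqN hj <| by
    rw [convM_sub]
    exact sub_eq_zero.2 hhg

end Convolution

/-- if the data are generated by a true system `Y = T(h*)U`, with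
`U_{0j} > 0` and `(T(h*)U)_{ij} > 0` for some `j` for every `i`, then `h*` is the
unique minimizer of `h ↦ I(Y‖T(h)U)` over `ℝ₊^{q+1}`, the minimal value is `0`,
and `T(h)U = T(h*)U` has the unique solution `h = h*`. -/
theorem true_system_unique_minimizer (q N m : ℕ) (hqN : q ≤ N)
    (U : Fin (N + 1) → Fin m → ℝ) (hU : ∀ i j, 0 ≤ U i j)
    (hstar : Fin (q + 1) → ℝ) (hstar_nonneg : ∀ k, 0 ≤ hstar k)
    (Y : Fin (N + 1) → Fin m → ℝ) (hYdef : Y = convM q N m hstar U)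
    (hcond : ∀ i : Fin (N + 1), ∃ j : Fin m, 0 < U 0 j ∧ 0 < convM q N m hstar U i j) :
    IdivM Y (convM q N m hstar U) = 0 ∧
    (∀ h : Fin (q + 1) → ℝ, (∀ k, 0 ≤ h k) →
      IdivM Y (convM q N m hstar U) ≤ IdivM Y (convM q N m h U)) ∧
    (∀ h : Fin (q + 1) → ℝ, (∀ k, 0 ≤ h k) →
      (∀ g : Fin (q + 1) → ℝ, (∀ k, 0 ≤ g k) →
        IdivM Y (convM q N m h U) ≤ IdivM Y (convM q N m g U)) → h = hstar) ∧
    (∀ h : Fin (q + 1) → ℝ, (∀ k, 0 ≤ h k) →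
      convM q N m h U = convM q N m hstar U → h = hstar) := by
  subst hYdef
  have hY := convM_nonneg hstar_nonneg hU
  obtain ⟨j, hj, -⟩ := hcond 0
  have hinj := convM_left_injective hqN hj.ne'
  refine ⟨IdivM_self _, fun h hh => ?_, fun h hh hmin => ?_, fun h _ heq => hinj heq⟩
  · rw [IdivM_self]
    exact IdivM_nonneg hY (convM_nonneg hh hU)
  · have hle := hmin hstar hstar_nonneg
    rw [IdivM_self] at hle
    have hzero := le_antisymm hle (IdivM_nonneg hY (convM_nonneg hh hU))
    exact hinj ((IdivM_eq_zero_iff hY (convM_nonneg hh hU)).1 hzero).symm
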